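/- arXiv:1712.08809 — 3 statements merged into one kernel-verified Lean document; each statement's English description precedes it below -/
import Mathlib

section
/- Every generalised t-graph (S,X) has a core, and the core is unique up to an isomorphism fixing X pointwise: if (S',X) and (S'',X) are both cores of (S,X), then there is a bijective homomorphism from (S',X) to (S'',X) whose inverse is also a homomorphism and which fixes X pointwise. -/
/-- IRIs -/
abbrev Iri := ℕ
/-- Variables -/
abbrev Var := ℕ
/-- A term is an IRI or a variable. -/
abbrev SPTerm := Iri ⊕ Var
/-- A triple pattern. -/
abbrev TriplePat := SPTerm × SPTerm × SPTerm
/-- A t-graph: a finite set of triple patterns. -/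
abbrev TGraph := Finset TriplePat

/-- Variables occurring in a triple pattern. -/
def tvars (t : TriplePat) : Set Var :=
  {v | t.1 = Sum.inr v ∨ t.2.1 = Sum.inr v ∨ t.2.2 = Sum.inr v}

/-- Variables occurring in a t-graph. -/
def gvars (S : TGraph) : Set Var := ⋃ t ∈ S, tvars t

/-- Apply a variable substitution to a term. -/
def applyTerm (h : Var → SPTerm) : SPTerm → SPTerm
  | Sum.inl i => Sum.inl i
  | Sum.inr v => h v

/-- Apply a variable substitution to a triple pattern. -/
def applyTriple (h : Var → SPTerm) (t : TriplePat) : TriplePat :=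
  (applyTerm h t.1, applyTerm h t.2.1, applyTerm h t.2.2)

/-- `h` is a homomorphism from `(S,X)` to `(S',X)`: it fixes `X` pointwise and
maps every triple of `S` into `S'`. -/
def IsHom (S S' : TGraph) (X : Set Var) (h : Var → SPTerm) : Prop :=
  (∀ x ∈ X, h x = Sum.inr x) ∧ ∀ t ∈ S, applyTriple h t ∈ S'

/-- `(S,X) → (S',X)`: existence of a homomorphism. -/
def Hom (S S' : TGraph) (X : Set Var) : Prop := ∃ h, IsHom S S' X h

/-- `(S,X)` is a core: no homomorphism to a proper subgraph of itself. -/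
def IsCore (S : TGraph) (X : Set Var) : Prop :=
  ∀ S' : TGraph, S' ⊆ S → ¬ S ⊆ S' → ¬ Hom S S' X

/-- `(C,X)` is a core of `(S,X)`. -/
def IsCoreOf (C S : TGraph) (X : Set Var) : Prop :=
  IsCore C X ∧ Hom S C X ∧ Hom C S X

/-- A bijective homomorphism from `(C1,X)` to `(C2,X)` whose inverse is also a
homomorphism (an isomorphism fixing `X` pointwise). -/
def IsIso (C1 C2 : TGraph) (X : Set Var) : Prop :=
  ∃ h h', IsHom C1 C2 X h ∧ IsHom C2 C1 X h' ∧
    (∀ v ∈ gvars C1, applyTerm h' (h v) = Sum.inr v) ∧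
    (∀ v ∈ gvars C2, applyTerm h (h' v) = Sum.inr v)

/-! ### Auxiliary development -/

def idSub : Var → SPTerm := Sum.inr

lemma applyTerm_id (s : SPTerm) : applyTerm idSub s = s := by cases s <;> rfl

lemma applyTriple_id (t : TriplePat) : applyTriple idSub t = t := by
  simp [applyTriple, applyTerm_id]

lemma isHom_id (S : TGraph) (X : Set Var) : IsHom S S X idSub :=
  ⟨fun _ _ => rfl, fun t ht => by rwa [applyTriple_id]⟩

def compSub (h2 h1 : Var → SPTerm) : Var → SPTerm := fun v => applyTerm h2 (h1 v)

lemma applyTerm_comp (h2 h1 : Var → SPTerm) (s : SPTerm) :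
    applyTerm (compSub h2 h1) s = applyTerm h2 (applyTerm h1 s) := by
  cases s <;> rfl

lemma applyTriple_comp (h2 h1 : Var → SPTerm) (t : TriplePat) :
    applyTriple (compSub h2 h1) t = applyTriple h2 (applyTriple h1 t) := by
  simp [applyTriple, applyTerm_comp]

lemma isHom_comp {A B C : TGraph} {X : Set Var} {h1 h2 : Var → SPTerm}
    (hh2 : IsHom B C X h2) (hh1 : IsHom A B X h1) : IsHom A C X (compSub h2 h1) := by
  refine ⟨fun x hx => ?_, fun t ht => ?_⟩
  · show applyTerm h2 (h1 x) = Sum.inr x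
    rw [hh1.1 x hx]; exact hh2.1 x hx
  · rw [applyTriple_comp]; exact hh2.2 _ (hh1.2 t ht)

def gterms (C : TGraph) : Finset SPTerm := C.biUnion (fun t => {t.1, t.2.1, t.2.2})

lemma mem_gterms {C : TGraph} {s : SPTerm} :
    s ∈ gterms C ↔ ∃ t ∈ C, s = t.1 ∨ s = t.2.1 ∨ s = t.2.2 := by
  simp [gterms]

lemma mem_gterms_of_gvars {C : TGraph} {v : Var} (hv : v ∈ gvars C) :
    Sum.inr v ∈ gterms C := by
  simp only [gvars, Set.mem_iUnion, tvars, Set.mem_setOf_eq] at hv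
  obtain ⟨t, ht, h⟩ := hv
  exact mem_gterms.mpr ⟨t, ht, by tauto⟩

lemma applyTerm_mem_gterms {C D : TGraph} {X : Set Var} {k : Var → SPTerm}
    (hk : IsHom C D X k) {s : SPTerm} (hs : s ∈ gterms C) :
    applyTerm k s ∈ gterms D := by
  obtain ⟨t, ht, h⟩ := mem_gterms.mp hs
  have := hk.2 t ht
  refine mem_gterms.mpr ⟨applyTriple k t, this, ?_⟩
  rcases h with h | h | h <;> subst h <;> simp [applyTriple] <;> tauto

/-- An endomorphism of a core is surjective on triples. -/
lemma core_endo_surj {C : TGraph} {X : Set Var} {k : Var → SPTerm}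
    (hC : IsCore C X) (hk : IsHom C C X k) :
    ∀ t ∈ C, ∃ t' ∈ C, applyTriple k t' = t := by
  classical
  set S' : TGraph := C.image (applyTriple k) with hS'
  have hsub : S' ⊆ C := by
    intro t ht
    obtain ⟨t', ht', rfl⟩ := Finset.mem_image.mp ht
    exact hk.2 t' ht'
  have hCsub : C ⊆ S' := by
    by_contra hn
    exact hC S' hsub hn ⟨k, hk.1, fun t ht => Finset.mem_image_of_mem _ ht⟩
  intro t ht
  obtain ⟨t', ht', h⟩ := Finset.mem_image.mp (hCsub ht)
  exact ⟨t', ht', h⟩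

/-- An endomorphism of a core is surjective on terms. -/
lemma core_endo_terms_surj {C : TGraph} {X : Set Var} {k : Var → SPTerm}
    (hC : IsCore C X) (hk : IsHom C C X k) :
    ∀ s ∈ gterms C, ∃ s' ∈ gterms C, applyTerm k s' = s := by
  intro s hs
  obtain ⟨t, ht, h⟩ := mem_gterms.mp hs
  obtain ⟨t', ht', h'⟩ := core_endo_surj hC hk t ht
  rcases h with h | h | h <;> subst h <;> rw [← h'] <;>
    [exact ⟨t'.1, mem_gterms.mpr ⟨t', ht', Or.inl rfl⟩, rfl⟩;
     exact ⟨t'.2.1, mem_gterms.mpr ⟨t', ht', Or.inr (Or.inl rfl)⟩, rfl⟩;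
     exact ⟨t'.2.2, mem_gterms.mpr ⟨t', ht', Or.inr (Or.inr rfl)⟩, rfl⟩]

lemma core_endo_terms_inj {C : TGraph} {X : Set Var} {k : Var → SPTerm}
    (hC : IsCore C X) (hk : IsHom C C X k) :
    Set.InjOn (applyTerm k) (gterms C) := by
  classical
  apply Finset.injOn_of_card_image_eq
  congr 1
  apply Finset.eq_of_subset_of_card_le
  · intro s hs
    obtain ⟨s', hs', rfl⟩ := Finset.mem_image.mp hs
    exact applyTerm_mem_gterms hk hs'
  · apply Finset.card_le_card_of_injOn (f := id)
    · intro s hs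
      obtain ⟨s', hs', h⟩ := core_endo_terms_surj hC hk s hs
      exact Finset.mem_image.mpr ⟨s', hs', by simpa using h⟩
    · exact Function.injective_id.injOn

def iterSub (k : Var → SPTerm) (m : ℕ) : Var → SPTerm :=
  fun v => (applyTerm k)^[m] (Sum.inr v)

lemma applyTerm_inl (k : Var → SPTerm) (i : Iri) : applyTerm k (Sum.inl i) = Sum.inl i := rfl

lemma iterate_inl (k : Var → SPTerm) (m : ℕ) (i : Iri) :
    (applyTerm k)^[m] (Sum.inl i) = Sum.inl i := by
  induction m with
  | zero => rfl
  | succ m ih => rw [Function.iterate_succ_apply, applyTerm_inl, ih]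

lemma applyTerm_iterSub (k : Var → SPTerm) (m : ℕ) (s : SPTerm) :
    applyTerm (iterSub k m) s = (applyTerm k)^[m] s := by
  cases s with
  | inl i => rw [applyTerm_inl, iterate_inl]
  | inr v => rfl

lemma isHom_iterSub {C : TGraph} {X : Set Var} {k : Var → SPTerm}
    (hk : IsHom C C X k) (m : ℕ) : IsHom C C X (iterSub k m) := by
  induction m with
  | zero => exact isHom_id C X
  | succ m ih =>
    have : iterSub k (m + 1) = compSub (iterSub k m) k := by
      funext v
      show (applyTerm k)^[m + 1] (Sum.inr v) = applyTerm (iterSub k m) (k v)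
      rw [Function.iterate_succ_apply, applyTerm_iterSub]
      rfl
    rw [this]
    exact isHom_comp ih hk

/-- Some positive iterate of a core endomorphism is the identity on terms. -/
lemma core_endo_iterate {C : TGraph} {X : Set Var} {k : Var → SPTerm}
    (hC : IsCore C X) (hk : IsHom C C X k) :
    ∃ n > 0, ∀ s ∈ gterms C, (applyTerm k)^[n] s = s := by
  classical
  set T := gterms C with hT
  have hmaps : ∀ s ∈ T, applyTerm k s ∈ T := fun s hs => applyTerm_mem_gterms hk hs
  have hinj : Set.InjOn (applyTerm k) T := core_endo_terms_inj hC hk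
  -- iterates stay in T
  have hiter_mem : ∀ (m : ℕ) (s : SPTerm), s ∈ T → (applyTerm k)^[m] s ∈ T := by
    intro m
    induction m with
    | zero => intro s hs; exact hs
    | succ m ih => intro s hs; rw [Function.iterate_succ_apply]; exact ih _ (hmaps s hs)
  -- iterates are injective on T
  have hiter_inj : ∀ (m : ℕ), Set.InjOn ((applyTerm k)^[m]) T := by
    intro m
    induction m with
    | zero => exact fun a _ b _ h => h
    | succ m ih =>
      intro a ha b hb h
      rw [Function.iterate_succ_apply, Function.iterate_succ_apply] at h
      exact hinj ha hb (ih (hmaps a ha) (hmaps b hb) h)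
  -- pigeonhole on the functions T → SPTerm restricted... use maps ℕ → (T → T)
  have : ∃ a b : ℕ, a < b ∧ ∀ s ∈ T, (applyTerm k)^[a] s = (applyTerm k)^[b] s := by
    obtain ⟨a, b, hne, h⟩ := Finite.exists_ne_map_eq_of_infinite
        (fun m : ℕ => (fun x : {x // x ∈ T} => (⟨(applyTerm k)^[m] x.1, hiter_mem m x.1 x.2⟩ : {x // x ∈ T})))
    rcases lt_or_gt_of_ne hne with hlt | hlt
    · exact ⟨a, b, hlt, fun s hs => congrArg Subtype.val (congrFun h ⟨s, hs⟩)⟩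
    · exact ⟨b, a, hlt, fun s hs => (congrArg Subtype.val (congrFun h ⟨s, hs⟩)).symm⟩
  obtain ⟨a, b, hab, heq⟩ := this
  refine ⟨b - a, Nat.sub_pos_of_lt hab, fun s hs => ?_⟩
  have key : (applyTerm k)^[a] ((applyTerm k)^[b - a] s) = (applyTerm k)^[a] s := by
    rw [← Function.iterate_add_apply]
    have : a + (b - a) = b := by omega
    rw [this]
    exact (heq s hs).symm
  exact hiter_inj a (hiter_mem _ _ hs) hs key

/-- Existence of a core. -/
lemma exists_core (X : Set Var) (S : TGraph) : ∃ C, IsCoreOf C S X := by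
  classical
  induction S using Finset.strongInduction with
  | _ S ih =>
    by_cases hc : IsCore S X
    · exact ⟨S, hc, ⟨idSub, isHom_id S X⟩, ⟨idSub, isHom_id S X⟩⟩
    · simp only [IsCore, not_forall, not_not] at hc
      obtain ⟨S', hsub, hns, hhom⟩ := hc
      obtain ⟨C, hCcore, ⟨g1, hg1⟩, ⟨g2, hg2⟩⟩ :=
        ih S' (Finset.ssubset_iff_subset_ne.mpr ⟨hsub, fun h => hns (h ▸ le_refl _)⟩)
      obtain ⟨h, hh⟩ := hhom
      refine ⟨C, hCcore, ⟨compSub g1 h, isHom_comp hg1 hh⟩,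
        ⟨g2, hg2.1, fun t ht => hsub (hg2.2 t ht)⟩⟩

/-- Uniqueness of the core up to isomorphism. -/
lemma core_iso {C1 C2 S : TGraph} {X : Set Var}
    (hC1 : IsCoreOf C1 S X) (hC2 : IsCoreOf C2 S X) : IsIso C1 C2 X := by
  classical
  obtain ⟨hcore1, ⟨p1, hp1⟩, ⟨q1, hq1⟩⟩ := hC1
  obtain ⟨hcore2, ⟨p2, hp2⟩, ⟨q2, hq2⟩⟩ := hC2
  -- f : C1 → C2, g : C2 → C1
  set f := compSub p2 q1 with hf
  set g := compSub p1 q2 with hg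
  have hfh : IsHom C1 C2 X f := isHom_comp hp2 hq1
  have hgh : IsHom C2 C1 X g := isHom_comp hp1 hq2
  set k := compSub g f with hk
  have hkh : IsHom C1 C1 X k := isHom_comp hgh hfh
  set k2 := compSub f g with hk2
  have hk2h : IsHom C2 C2 X k2 := isHom_comp hfh hgh
  obtain ⟨n, hn, hfix⟩ := core_endo_iterate hcore1 hkh
  set h' := compSub (iterSub k (n - 1)) g with hh'
  have hh'h : IsHom C2 C1 X h' := isHom_comp (isHom_iterSub hkh (n - 1)) hgh
  -- left inverse on terms of C1
  have hleft : ∀ s ∈ gterms C1, applyTerm h' (applyTerm f s) = s := by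
    intro s hs
    rw [hh', applyTerm_comp, applyTerm_iterSub, ← applyTerm_comp, ← hk,
      ← Function.iterate_succ_apply]
    rw [show (n - 1).succ = n from by omega]
    exact hfix s hs
  -- f is injective on gterms C1 and maps into gterms C2
  have hfmaps : ∀ s ∈ gterms C1, applyTerm f s ∈ gterms C2 :=
    fun s hs => applyTerm_mem_gterms hfh hs
  have hfinj : Set.InjOn (applyTerm f) (gterms C1) := by
    intro a ha b hb h
    rw [← hleft a ha, ← hleft b hb, h]
  have hgmaps : ∀ s ∈ gterms C2, applyTerm g s ∈ gterms C1 :=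
    fun s hs => applyTerm_mem_gterms hgh hs
  have hginj : Set.InjOn (applyTerm g) (gterms C2) := by
    intro a ha b hb h
    apply core_endo_terms_inj hcore2 hk2h ha hb
    have e1 := applyTerm_comp f g a
    have e2 := applyTerm_comp f g b
    exact e1.trans (by rw [h, ← e2])
  -- cardinalities are equal, so f is surjective onto gterms C2
  have hcard1 : (gterms C1).card ≤ (gterms C2).card :=
    Finset.card_le_card_of_injOn (applyTerm f) hfmaps hfinj
  have hcard2 : (gterms C2).card ≤ (gterms C1).card :=
    Finset.card_le_card_of_injOn (applyTerm g) hgmaps hginj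
  have himage : (gterms C1).image (applyTerm f) = gterms C2 := by
    apply Finset.eq_of_subset_of_card_le
    · intro s hs
      obtain ⟨s', hs', rfl⟩ := Finset.mem_image.mp hs
      exact hfmaps s' hs'
    · rw [Finset.card_image_of_injOn hfinj]; omega
  have hfsurj : ∀ u ∈ gterms C2, ∃ s ∈ gterms C1, applyTerm f s = u := by
    intro u hu
    obtain ⟨s, hs, h⟩ := Finset.mem_image.mp (himage ▸ hu)
    exact ⟨s, hs, h⟩
  refine ⟨f, h', hfh, hh'h, fun v hv => ?_, fun v hv => ?_⟩
  · have : applyTerm f (Sum.inr v) = f v := rfl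
    rw [← this]
    exact hleft _ (mem_gterms_of_gvars hv)
  · have h1 : applyTerm h' (Sum.inr v) = h' v := rfl
    obtain ⟨s, hs, hsu⟩ := hfsurj _ (mem_gterms_of_gvars hv)
    rw [← h1, ← hsu, hleft s hs, hsu]


/-- every generalised t-graph has a core, unique up to isomorphism
fixing `X` pointwise. -/
theorem core_exists_unique (S : TGraph) (X : Set Var) (hX : X ⊆ gvars S) :
    (∃ C, IsCoreOf C S X) ∧
    ∀ C1 C2 : TGraph, IsCoreOf C1 S X → IsCoreOf C2 S X → IsIso C1 C2 X :=
  ⟨exists_core X S, fun _ _ h1 h2 => core_iso h1 h2⟩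
end

section
/- Union of pebble-game wins over variable-disjoint parts (Proposition 4, item 2): if (S₁,X),…,(S_ℓ,X) are generalised t-graphs with pairwise disjoint sets of non-distinguished variables (vars(S_i)∖X ∩ vars(S_j)∖X = ∅ for i ≠ j), and the Duplicator wins the existential k-pebble game on each (S_i,X), G, μ, then the Duplicator wins the existential k-pebble game on (S₁ ∪ ⋯ ∪ S_ℓ, X), G, μ. -/
/-- An RDF triple (over IRIs only). -/
abbrev RTriple := Iri × Iri × Iri
/-- An RDF graph: a finite set of RDF triples. -/
abbrev RDFGraph := Finset RTriple

/-- View an RDF triple as a triple pattern. -/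
def liftTriple (t : RTriple) : TriplePat :=
  (Sum.inl t.1, Sum.inl t.2.1, Sum.inl t.2.2)

/-- The triple obtained by applying `h : Var → Iri` to `t` lies in `G`. -/
def mapsTriple (h : Var → Iri) (t : TriplePat) (G : RDFGraph) : Prop :=
  applyTriple (fun v => Sum.inl (h v)) t ∈ G.image liftTriple

/-- `(S,X) →^μ G`: there is a homomorphism from `S` to the RDF graph `G`
agreeing with `μ` on `X`. -/
def HomToRDF (S : TGraph) (X : Set Var) (G : RDFGraph) (μ : Var → Iri) : Prop :=
  ∃ h : Var → Iri, (∀ x ∈ X, h x = μ x) ∧ ∀ t ∈ S, mapsTriple h t G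

/-- A winning strategy for the Duplicator in the existential `k`-pebble game on
`(S,X)`, `G`, `μ`: a nonempty family of partial homomorphisms (represented as a
domain together with a total function whose values outside the domain are
irrelevant), each extending `μ` on `X`, with at most `k` non-`X` variables in
its domain, closed under restriction and with the forth extension property. -/
structure PebbleStrategy (S : TGraph) (X : Set Var) (G : RDFGraph)
    (μ : Var → Iri) (k : ℕ) where
  fam : Set (Set Var × (Var → Iri))
  nonempty : fam.Nonempty
  dom_sub : ∀ p ∈ fam, X ⊆ p.1 ∧ p.1 ⊆ X ∪ gvars S
  extends_mu : ∀ p ∈ fam, ∀ x ∈ X, p.2 x = μ x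
  size : ∀ p ∈ fam, (p.1 \ X).Finite ∧ (p.1 \ X).ncard ≤ k
  partial_hom : ∀ p ∈ fam, ∀ t ∈ S, tvars t ⊆ p.1 → mapsTriple p.2 t G
  restrict : ∀ p ∈ fam, ∀ D : Set Var, X ⊆ D → D ⊆ p.1 → (D, p.2) ∈ fam
  forth : ∀ p ∈ fam, (p.1 \ X).ncard < k → ∀ v ∈ gvars S \ X,
    ∃ q ∈ fam, p.1 ⊆ q.1 ∧ v ∈ q.1 ∧ ∀ u ∈ p.1, q.2 u = p.2 u

/-- `(S,X) →^μ_k G`: the Duplicator wins the existential `k`-pebble game. -/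
def PebbleWin (S : TGraph) (X : Set Var) (G : RDFGraph) (μ : Var → Iri)
    (k : ℕ) : Prop :=
  Nonempty (PebbleStrategy S X G μ k)


lemma applyTerm_congr (f g : Var → SPTerm) (s : SPTerm)
    (h : ∀ v, s = Sum.inr v → f v = g v) : applyTerm f s = applyTerm g s := by
  cases s with
  | inl i => rfl
  | inr v => exact h v rfl

lemma applyTriple_congr (f g : Var → SPTerm) (t : TriplePat)
    (h : ∀ v ∈ tvars t, f v = g v) : applyTriple f t = applyTriple g t := by
  obtain ⟨a, b, c⟩ := t
  simp only [applyTriple, Prod.mk.injEq]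
  refine ⟨?_, ?_, ?_⟩
  · exact applyTerm_congr _ _ _ fun v hv => h v (Or.inl hv)
  · exact applyTerm_congr _ _ _ fun v hv => h v (Or.inr (Or.inl hv))
  · exact applyTerm_congr _ _ _ fun v hv => h v (Or.inr (Or.inr hv))

lemma mapsTriple_congr {G : RDFGraph} {f g : Var → Iri} {t : TriplePat}
    (h : ∀ v ∈ tvars t, f v = g v) (hm : mapsTriple f t G) : mapsTriple g t G := by
  unfold mapsTriple at *
  rwa [applyTriple_congr (fun v => Sum.inl (g v)) (fun v => Sum.inl (f v)) t
    (fun v hv => congrArg Sum.inl (h v hv).symm)]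

lemma tvars_sub_gvars {t : TriplePat} {S : TGraph} (ht : t ∈ S) : tvars t ⊆ gvars S :=
  fun v hv => Set.mem_biUnion ht hv

lemma gvars_biUnion (ℓ : ℕ) (S : Fin ℓ → TGraph) :
    gvars (Finset.univ.biUnion S) = ⋃ i, gvars (S i) := by
  ext v
  simp only [gvars, Set.mem_iUnion, Finset.mem_biUnion, Finset.mem_univ, true_and]
  constructor
  · rintro ⟨t, ⟨i, hti⟩, hv⟩
    exact ⟨i, t, hti, hv⟩
  · rintro ⟨i, t, hti, hv⟩
    exact ⟨t, ⟨i, hti⟩, hv⟩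

/-- if `(S₁,X),…,(S_ℓ,X)` have pairwise disjoint sets of
non-distinguished variables and the Duplicator wins the existential `k`-pebble
game on each of them, then he wins on their union. -/
theorem pebbleWin_union (ℓ : ℕ) (S : Fin ℓ → TGraph) (X : Set Var)
    (hX : ∀ i, X ⊆ gvars (S i))
    (hdisj : ∀ i j, i ≠ j → Disjoint (gvars (S i) \ X) (gvars (S j) \ X))
    (G : RDFGraph) (μ : Var → Iri) (k : ℕ) (hk : 2 ≤ k)
    (hwin : ∀ i, PebbleWin (S i) X G μ k) :
    PebbleWin (Finset.univ.biUnion S) X G μ k := by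
  classical
  have T : ∀ i, PebbleStrategy (S i) X G μ k := fun i => (hwin i).some
  set U : TGraph := Finset.univ.biUnion S with hU
  have hgU : gvars U = ⋃ i, gvars (S i) := gvars_biUnion ℓ S
  set Fam : Set (Set Var × (Var → Iri)) :=
    {p | X ⊆ p.1 ∧ p.1 ⊆ X ∪ gvars U ∧ (∀ x ∈ X, p.2 x = μ x) ∧
      (p.1 \ X).Finite ∧ (p.1 \ X).ncard ≤ k ∧
      ∀ i, ∃ q ∈ (T i).fam, q.1 = p.1 ∩ (X ∪ gvars (S i)) ∧
        ∀ u ∈ q.1, q.2 u = p.2 u} with hFam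
  refine ⟨⟨Fam, ?_, ?_, ?_, ?_, ?_, ?_, ?_⟩⟩
  · -- nonempty
    refine ⟨(X, μ), ?_, ?_, ?_, ?_, ?_, ?_⟩
    · exact subset_rfl
    · exact Set.subset_union_left
    · intro x _; rfl
    · simp
    · simp
    · intro i
      obtain ⟨q0, hq0⟩ := (T i).nonempty
      have hXq : X ⊆ q0.1 := ((T i).dom_sub q0 hq0).1
      have hmem := (T i).restrict q0 hq0 X subset_rfl hXq
      refine ⟨(X, q0.2), hmem, ?_, ?_⟩
      · simp only []
        ext u
        constructor
        · intro hu; exact ⟨hu, Or.inl hu⟩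
        · intro hu; exact hu.1
      · intro u hu
        exact (T i).extends_mu (X, q0.2) hmem u hu
  · -- dom_sub
    rintro p ⟨h1, h2, _⟩
    exact ⟨h1, h2⟩
  · -- extends_mu
    rintro p ⟨_, _, h3, _⟩
    exact h3
  · -- size
    rintro p ⟨_, _, _, h4, h5, _⟩
    exact ⟨h4, h5⟩
  · -- partial_hom
    rintro p ⟨h1, h2, h3, h4, h5, h6⟩ t ht hsub
    obtain ⟨i, _, hti⟩ := Finset.mem_biUnion.mp ht
    obtain ⟨q, hq, hqdom, hqagree⟩ := h6 i
    have htv : tvars t ⊆ q.1 := by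
      rw [hqdom]
      intro v hv
      exact ⟨hsub hv, Or.inr (tvars_sub_gvars hti hv)⟩
    have := (T i).partial_hom q hq t hti htv
    exact mapsTriple_congr (fun v hv => hqagree v (htv hv)) this
  · -- restrict
    rintro p ⟨h1, h2, h3, h4, h5, h6⟩ D hXD hDp
    refine ⟨hXD, fun v hv => h2 (hDp hv), h3, h4.subset (Set.diff_subset_diff_left hDp),
      le_trans (Set.ncard_le_ncard (Set.diff_subset_diff_left hDp) h4) h5, ?_⟩
    intro i
    obtain ⟨q, hq, hqdom, hqagree⟩ := h6 i
    have hsub1 : X ⊆ D ∩ (X ∪ gvars (S i)) :=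
      fun x hx => ⟨hXD hx, Or.inl hx⟩
    have hsub2 : D ∩ (X ∪ gvars (S i)) ⊆ q.1 := by
      rw [hqdom]; exact Set.inter_subset_inter_left _ hDp
    refine ⟨(D ∩ (X ∪ gvars (S i)), q.2),
      (T i).restrict q hq _ hsub1 hsub2, rfl, ?_⟩
    intro u hu
    exact hqagree u (hsub2 hu)
  · -- forth
    rintro p ⟨h1, h2, h3, h4, h5, h6⟩ hlt v hv
    obtain ⟨hvU, hvX⟩ := hv
    rw [hgU, Set.mem_iUnion] at hvU
    obtain ⟨i, hvi⟩ := hvU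
    obtain ⟨q, hq, hqdom, hqagree⟩ := h6 i
    have hqsub : q.1 \ X ⊆ p.1 \ X := by
      rw [hqdom]; exact Set.diff_subset_diff_left Set.inter_subset_left
    have hqlt : (q.1 \ X).ncard < k :=
      lt_of_le_of_lt (Set.ncard_le_ncard hqsub h4) hlt
    obtain ⟨r, hr, hqr, hvr, hragree⟩ := (T i).forth q hq hqlt v ⟨hvi, hvX⟩
    have hXq : X ⊆ q.1 := ((T i).dom_sub q hq).1
    -- restrict r to q.1 ∪ {v}
    have hr' : (q.1 ∪ {v}, r.2) ∈ (T i).fam :=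
      (T i).restrict r hr (q.1 ∪ {v}) (fun x hx => Or.inl (hXq hx))
        (Set.union_subset hqr (by simpa using hvr))
    set f : Var → Iri := fun u => if u = v then r.2 v else p.2 u with hf
    have hfp : ∀ u ∈ p.1, f u = p.2 u := by
      intro u hu
      by_cases huv : u = v
      · subst huv
        have huq : u ∈ q.1 := by
          rw [hqdom]; exact ⟨hu, Or.inr hvi⟩
        simp only [hf, if_pos rfl]
        rw [hragree u huq, hqagree u huq]
      · simp [hf, huv]
    refine ⟨(insert v p.1, f), ⟨?_, ?_, ?_, ?_, ?_, ?_⟩,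
      Set.subset_insert _ _, Set.mem_insert _ _, hfp⟩
    · exact h1.trans (Set.subset_insert _ _)
    · intro u hu
      rcases hu with rfl | hu
      · exact Or.inr (by rw [hgU]; exact Set.mem_iUnion.mpr ⟨i, hvi⟩)
      · exact h2 hu
    · intro x hx
      have : x ≠ v := fun h => hvX (h ▸ hx)
      simp only [hf, if_neg this]
      exact h3 x hx
    · have : insert v p.1 \ X = insert v (p.1 \ X) := by
        ext u
        simp only [Set.mem_diff, Set.mem_insert_iff]
        constructor
        · rintro ⟨rfl | hu, hx⟩
          · exact Or.inl rfl
          · exact Or.inr ⟨hu, hx⟩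
        · rintro (rfl | ⟨hu, hx⟩)
          · exact ⟨Or.inl rfl, hvX⟩
          · exact ⟨Or.inr hu, hx⟩
      rw [this]; exact h4.insert v
    · have heq : insert v p.1 \ X = insert v (p.1 \ X) := by
        ext u
        simp only [Set.mem_diff, Set.mem_insert_iff]
        constructor
        · rintro ⟨rfl | hu, hx⟩
          · exact Or.inl rfl
          · exact Or.inr ⟨hu, hx⟩
        · rintro (rfl | ⟨hu, hx⟩)
          · exact ⟨Or.inl rfl, hvX⟩
          · exact ⟨Or.inr hu, hx⟩
      rw [heq]
      exact le_trans (Set.ncard_insert_le v _) (Nat.succ_le_of_lt hlt)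
    · intro j
      by_cases hij : j = i
      · subst hij
        refine ⟨(q.1 ∪ {v}, r.2), hr', ?_, ?_⟩
        · simp only []
          rw [hqdom]
          ext u
          simp only [Set.mem_union, Set.mem_inter_iff, Set.mem_insert_iff,
            Set.mem_singleton_iff]
          constructor
          · rintro (⟨hu, hA⟩ | rfl)
            · exact ⟨Or.inr hu, hA⟩
            · exact ⟨Or.inl rfl, Or.inr hvi⟩
          · rintro ⟨rfl | hu, hA⟩
            · exact Or.inr rfl
            · exact Or.inl ⟨hu, hA⟩
        · intro u hu
          rcases hu with hu | hu
          · by_cases huv : u = v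
            · subst huv; simp [hf]
            · simp only [hf, if_neg huv]
              rw [hragree u hu, hqagree u hu]
          · rw [Set.mem_singleton_iff] at hu
            subst hu
            simp [hf]
      · obtain ⟨qj, hqj, hqjdom, hqjagree⟩ := h6 j
        have hveq : insert v p.1 ∩ (X ∪ gvars (S j)) = p.1 ∩ (X ∪ gvars (S j)) := by
          have hvnot : v ∉ X ∪ gvars (S j) := by
            rintro (h | h)
            · exact hvX h
            · exact Set.disjoint_left.mp (hdisj j i hij) ⟨h, hvX⟩ ⟨hvi, hvX⟩
          ext u
          simp only [Set.mem_inter_iff, Set.mem_insert_iff]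
          constructor
          · rintro ⟨rfl | hu, hA⟩
            · exact absurd hA hvnot
            · exact ⟨hu, hA⟩
          · rintro ⟨hu, hA⟩
            exact ⟨Or.inr hu, hA⟩
        refine ⟨qj, hqj, by rw [hqjdom, hveq], ?_⟩
        intro u hu
        have hup : u ∈ p.1 := by
          rw [hqjdom] at hu; exact hu.1
        rw [hqjagree u hu, ← hfp u hup]
end

section
/- If μ ∈ ⟦𝒯⟧_G for a well-designed pattern tree 𝒯 in NR normal form, then the witnessing subtree is unique: there is exactly one subtree 𝒯' of 𝒯 such that μ is a homomorphism from pat(𝒯') to G with dom(μ) = vars(𝒯'). -/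
/-!
Let `B` and `C` be rooted connected sets of nodes with `vars(B) ⊆ vars(C)`, and let `n ∈ B` be a
non-root node with parent `p`. By NR normal form some variable `x` of `n` does not occur at `p`, and
`x` occurs at some node `m ∈ C`. The nodes mentioning `x` form a connected set containing `n` but not
`p`, so in the tree `m` lies below `n`; the path from the root to `m` then passes through `n`, and
this path stays inside the connected set `C`. Hence `B ⊆ C`, and by symmetry the witnesses agree.
-/

namespace SimpleGraph

variable {V : Type*} {G : SimpleGraph V}

lemma Preconnected.exists_walk_support_subset_of_induce {s : Set V}
    (hs : (G.induce s).Preconnected) {a b : V} (ha : a ∈ s) (hb : b ∈ s) :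
    ∃ W : G.Walk a b, ∀ v ∈ W.support, v ∈ s := by
  obtain ⟨W⟩ := hs ⟨a, ha⟩ ⟨b, hb⟩
  refine ⟨W.map (Embedding.induce s).toHom, fun v hv => ?_⟩
  obtain ⟨⟨u, hu⟩, -, rfl⟩ := List.mem_map.1 ((Walk.support_map _ W) ▸ hv)
  exact hu

lemma Reachable.exists_isPath_mem_support_of_dist_add_one {r p n : V} (hrp : G.Reachable r p)
    (hadj : G.Adj p n) (hdist : G.dist r p + 1 = G.dist r n) :
    ∃ Q : G.Walk r n, Q.IsPath ∧ p ∈ Q.support := by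
  obtain ⟨P, -, hP⟩ := hrp.exists_path_of_dist
  refine ⟨P.concat hadj, (P.concat hadj).isPath_of_length_eq_dist ?_, ?_⟩
  · rw [Walk.length_concat, hP, hdist]
  · exact Walk.support_subset_support_concat P hadj P.end_mem_support

lemma IsAcyclic.support_subset_of_isPath (hG : G.IsAcyclic) {u v : V} {Q : G.Walk u v}
    (hQ : Q.IsPath) (W : G.Walk u v) : Q.support ⊆ W.support := by
  classical
  rw [Subtype.mk.inj <| hG.subsingleton_path u v |>.elim ⟨Q, hQ⟩ ⟨W.bypass, W.bypass_isPath⟩]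
  exact W.support_bypass_subset_support

lemma IsAcyclic.support_subset_of_preconnected (hG : G.IsAcyclic) {s : Set V}
    (hs : (G.induce s).Preconnected) {a b : V} (ha : a ∈ s) (hb : b ∈ s) {Q : G.Walk a b}
    (hQ : Q.IsPath) : ∀ v ∈ Q.support, v ∈ s := by
  obtain ⟨W, hW⟩ := hs.exists_walk_support_subset_of_induce ha hb
  exact fun v hv => hW v (hG.support_subset_of_isPath hQ W hv)

lemma IsTree.mem_of_preconnected_of_meets_subtree (hT : G.IsTree) {r p n : V}
    (hadj : G.Adj p n) (hdist : G.dist r p + 1 = G.dist r n)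
    {S : Set V} (hS : (G.induce S).Preconnected) (hnS : n ∈ S) (hpS : p ∉ S)
    {A : Set V} (hA : (G.induce A).Preconnected) (hrA : r ∈ A)
    {m : V} (hmA : m ∈ A) (hmS : m ∈ S) : n ∈ A := by
  classical
  obtain ⟨Q, hQ, hpQ⟩ :=
    (hT.connected.preconnected r p).exists_isPath_mem_support_of_dist_add_one hadj hdist
  obtain ⟨W, hWS⟩ := hS.exists_walk_support_subset_of_induce hnS hmS
  obtain ⟨P, hP⟩ := hT.existsUnique_path r m |>.exists
  have hpW : p ∉ W.support := fun h => hpS (hWS p h)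
  have hpP : p ∈ P.support := by
    have := hT.isAcyclic.support_subset_of_isPath hQ (P.append W.reverse) hpQ
    rw [Walk.mem_support_append_iff, Walk.support_reverse, List.mem_reverse] at this
    exact this.resolve_right hpW
  have hpW' : p ∉ W.reverse.bypass.support := fun h =>
    hpW (by simpa using W.reverse.support_bypass_subset_support h)
  have hnP : n ∈ (P.dropUntil p hpP).reverse.support :=
    hT.isAcyclic.mem_support_of_ne_mem_support_of_adj_of_isPath (hP.dropUntil hpP).reverse
      W.reverse.bypass_isPath hadj hpW'
  rw [Walk.support_reverse, List.mem_reverse] at hnP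
  exact hT.isAcyclic.support_subset_of_preconnected hA hrA hmA hP n
    (P.support_dropUntil_subset_support hpP hnP)

end SimpleGraph

open SimpleGraph

lemma subset_of_gvars_subset {N : Type} {T : SimpleGraph N} (hT : T.IsTree) {r : N}
    {lab : N → TGraph} (hconn : ∀ x : Var, (T.induce {n | x ∈ gvars (lab n)}).Preconnected)
    {parent : N → N}
    (hparent : ∀ n, n ≠ r → T.Adj (parent n) n ∧ T.dist r (parent n) + 1 = T.dist r n)
    (hNR : ∀ n, n ≠ r → ∃ x ∈ gvars (lab n), x ∉ gvars (lab (parent n)))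
    {B C : Set N} (hrC : r ∈ C) (hC : (T.induce C).Preconnected)
    (hvars : (⋃ n ∈ B, gvars (lab n)) ⊆ ⋃ n ∈ C, gvars (lab n)) : B ⊆ C := by
  intro n hnB
  by_cases hn : n = r
  · exact hn ▸ hrC
  obtain ⟨x, hxn, hxp⟩ := hNR n hn
  obtain ⟨m, hmC, hxm⟩ := Set.mem_iUnion₂.1 (hvars (Set.mem_biUnion hnB hxn))
  obtain ⟨hadj, hdist⟩ := hparent n hn
  exact hT.mem_of_preconnected_of_meets_subtree hadj hdist (hconn x) hxn hxp hC hrC hmC hxm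

theorem witness_subtree_unique_general {N : Type}
    (T : SimpleGraph N) (hT : T.IsTree) (r : N) (lab : N → TGraph)
    -- wdPT condition: the occurrences of each variable form a connected subgraph
    (hconn : ∀ x : Var, (T.induce {n | x ∈ gvars (lab n)}).Preconnected)
    -- `parent n` is the parent of a non-root node `n`
    (parent : N → N)
    (hparent : ∀ n, n ≠ r → T.Adj (parent n) n ∧
      T.dist r (parent n) + 1 = T.dist r n)
    -- NR normal form: every non-root node has a variable not in its parent
    (hNR : ∀ n, n ≠ r → ∃ x ∈ gvars (lab n), x ∉ gvars (lab (parent n)))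
    (D : Set Var) -- D is the domain of μ
    (A₁ A₂ : Set N)
    (h₁ : r ∈ A₁ ∧ (T.induce A₁).Connected)
    (h₂ : r ∈ A₂ ∧ (T.induce A₂).Connected)
    (hv₁ : (⋃ n ∈ A₁, gvars (lab n)) = D)
    (hv₂ : (⋃ n ∈ A₂, gvars (lab n)) = D) :
    A₁ = A₂ := by
  have hvars : (⋃ n ∈ A₁, gvars (lab n)) = ⋃ n ∈ A₂, gvars (lab n) := hv₁.trans hv₂.symm
  exact (subset_of_gvars_subset hT hconn hparent hNR h₂.1 h₂.2.preconnected hvars.le).antisymm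
    (subset_of_gvars_subset hT hconn hparent hNR h₁.1 h₁.2.preconnected hvars.ge)

/-- in a well-designed pattern tree in NR normal form, the
subtree witnessing `μ ∈ ⟦𝒯⟧_G` is unique: there is at most one subtree `𝒯'`
(a connected set of nodes containing the root) such that `μ` is a homomorphism
from `pat(𝒯')` to `G` with `dom(μ) = vars(𝒯')`. -/
theorem witness_subtree_unique {N : Type} [Fintype N]
    (T : SimpleGraph N) (hT : T.IsTree) (r : N) (lab : N → TGraph)
    -- wdPT condition: the occurrences of each variable form a connected subgraph
    (hconn : ∀ x : Var, (T.induce {n | x ∈ gvars (lab n)}).Preconnected)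
    -- `parent n` is the parent of a non-root node `n`
    (parent : N → N)
    (hparent : ∀ n, n ≠ r → T.Adj (parent n) n ∧
      T.dist r (parent n) + 1 = T.dist r n)
    -- NR normal form: every non-root node has a variable not in its parent
    (hNR : ∀ n, n ≠ r → ∃ x ∈ gvars (lab n), x ∉ gvars (lab (parent n)))
    (G : RDFGraph) (μ : Var → Iri) (D : Set Var) -- D is the domain of μ
    (A₁ A₂ : Set N)
    (h₁ : r ∈ A₁ ∧ (T.induce A₁).Connected)
    (h₂ : r ∈ A₂ ∧ (T.induce A₂).Connected)
    (hv₁ : (⋃ n ∈ A₁, gvars (lab n)) = D)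
    (hv₂ : (⋃ n ∈ A₂, gvars (lab n)) = D)
    (hm₁ : ∀ n ∈ A₁, ∀ t ∈ lab n, mapsTriple μ t G)
    (hm₂ : ∀ n ∈ A₂, ∀ t ∈ lab n, mapsTriple μ t G) :
    A₁ = A₂ :=
  witness_subtree_unique_general T hT r lab hconn parent hparent hNR D A₁ A₂ h₁ h₂ hv₁ hv₂
end
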